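/- Let X be a topological space, m : X → ℝ lower semicontinuous, M : X → ℝ upper semicontinuous, with m(x) ≤ M(x) for all x, and suppose that for every nonempty open set U ⊆ X one has sup_{x∈U} m(x) = sup_{x∈U} M(x). Then the set {x ∈ X : m(x) ≠ M(x)} is meager in X. -/

import Mathlib

/-!
For `ε > 0` the set `{m + ε ≤ M}` is closed by semicontinuity. It has empty interior: on an open
`V` inside it on which `M` stays below `M x₀ + ε / 2` (upper semicontinuity at `x₀ ∈ V`), `m` is
bounded by `M x₀ - ε / 2`, so the supremum of `m` over `V` falls short of that of `M`. Hence
`{m ≠ M} = ⋃ₙ {m + 1 / (n + 1) ≤ M}` is a countable union of nowhere dense sets.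
-/

open Set

section

variable {X : Type*} [TopologicalSpace X] {m M : X → ℝ} {ε : ℝ}

theorem isClosed_setOf_add_le (hm : LowerSemicontinuous m) (hM : UpperSemicontinuous M) :
    IsClosed {x | m x + ε ≤ M x} := by
  rw [← isOpen_compl_iff, isOpen_iff_mem_nhds]
  intro x hx
  replace hx : M x < m x + ε := not_le.1 hx
  obtain ⟨c, hMc, hcm⟩ := exists_between hx
  filter_upwards [hM x c hMc, hm x (c - ε) (by linarith)] with y hMy hmy
  show ¬ m y + ε ≤ M y
  linarith

theorem interior_setOf_add_le_eq_empty (hM : UpperSemicontinuous M)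
    (hsup : ∀ U : Set X, IsOpen U → U.Nonempty →
      (⨆ x ∈ U, (M x : EReal)) ≤ ⨆ x ∈ U, (m x : EReal))
    (hε : 0 < ε) : interior {x | m x + ε ≤ M x} = ∅ := by
  refine eq_empty_of_forall_notMem fun x₀ hx₀ => ?_
  set V := interior {x | m x + ε ≤ M x} ∩ M ⁻¹' Iio (M x₀ + ε / 2)
  have hx₀V : x₀ ∈ V := ⟨hx₀, by simp only [mem_preimage, mem_Iio]; linarith⟩
  have hV : IsOpen V := isOpen_interior.inter (hM.isOpen_preimage _)
  have hmV : ∀ x ∈ V, m x ≤ M x₀ - ε / 2 := fun x hx => by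
    have h₁ : m x + ε ≤ M x := (interior_subset hx.1 : x ∈ {x | m x + ε ≤ M x})
    have h₂ : M x < M x₀ + ε / 2 := hx.2
    linarith
  have : ((M x₀ : ℝ) : EReal) ≤ ((M x₀ - ε / 2 : ℝ) : EReal) :=
    calc ((M x₀ : ℝ) : EReal) ≤ ⨆ x ∈ V, (M x : EReal) := le_iSup₂_of_le x₀ hx₀V le_rfl
      _ ≤ ⨆ x ∈ V, (m x : EReal) := hsup V hV ⟨x₀, hx₀V⟩
      _ ≤ ((M x₀ - ε / 2 : ℝ) : EReal) := iSup₂_le fun x hx => EReal.coe_le_coe (hmV x hx)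
  linarith [EReal.coe_le_coe_iff.1 this]

end

/-- If `m` is lower semicontinuous, `M` upper semicontinuous, `m ≤ M`, and the suprema
of `m` and `M` agree over every nonempty open set, then `{m ≠ M}` is meager. -/
theorem meagre_ne_of_lsc_usc_sup_eq
    {X : Type*} [TopologicalSpace X] (m M : X → ℝ)
    (hm : LowerSemicontinuous m) (hM : UpperSemicontinuous M)
    (hle : ∀ x, m x ≤ M x)
    (hsup : ∀ U : Set X, IsOpen U → U.Nonempty →
      (⨆ x ∈ U, (m x : EReal)) = ⨆ x ∈ U, (M x : EReal)) :
    IsMeagre {x : X | m x ≠ M x} := by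
  have hnd (n : ℕ) : IsNowhereDense {x | m x + 1 / (n + 1) ≤ M x} :=
    (isClosed_setOf_add_le hm hM).isNowhereDense_iff.2 <|
      interior_setOf_add_le_eq_empty hM (fun U hU hne => (hsup U hU hne).ge) (by positivity)
  refine (isMeagre_iUnion fun n => (hnd n).isMeagre).mono fun x hx => ?_
  obtain ⟨n, hn⟩ := exists_nat_one_div_lt (sub_pos.2 ((hle x).lt_of_ne hx))
  exact mem_iUnion.2 ⟨n, show m x + 1 / (n + 1) ≤ M x by linarith⟩
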